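/- Let G be a connected finite simple graph that is a tree, has exactly one vertex of degree 3, and all other vertices of degree at most 2, and such that at least two of the three paths emanating from the degree-3 vertex have length ≥ 2 and at least one has length ≥ 3 and another has length ≥ 2 with the third of length ≥ 2. If the three arm lengths (p, q, r) of G satisfy 1/ (p+1) + 1/(q+1) + 1/(r+1) < 1, then the quadratic form q(x) = Σ x_v² − Σ_{edges} x_u x_v of G is not positive definite. -/

import Mathlib

open SimpleGraph Finset
open scoped Classical

/-- The quadratic form of a finite simple graph:
`q(x) = Σ_{v ∈ V} x_v² − Σ_{{u,v} ∈ E} x_u x_v`. -/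
noncomputable def graphForm {V : Type*} [Fintype V] (G : SimpleGraph V) (x : V → ℤ) : ℤ :=
  (∑ v, (x v) ^ 2) -
    ∑ e ∈ G.edgeFinset, Sym2.lift ⟨fun u v => x u * x v, fun _ _ => mul_comm _ _⟩ e

/-- The star-shaped tree `T(p, q, r)`: a central vertex (`none`) with three paths of
`p`, `q` and `r` additional vertices attached to it. -/
def starTree (p q r : ℕ) : SimpleGraph (Option (Fin p ⊕ Fin q ⊕ Fin r)) :=
  SimpleGraph.fromRel (fun a b =>
    match a, b with
    | none, some (Sum.inl j) => j.val = 0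
    | none, some (Sum.inr (Sum.inl j)) => j.val = 0
    | none, some (Sum.inr (Sum.inr j)) => j.val = 0
    | some (Sum.inl j), some (Sum.inl j') => j.val + 1 = j'.val
    | some (Sum.inr (Sum.inl j)), some (Sum.inr (Sum.inl j')) => j.val + 1 = j'.val
    | some (Sum.inr (Sum.inr j)), some (Sum.inr (Sum.inr j')) => j.val + 1 = j'.val
    | _, _ => False)

/-! ### Auxiliary definitions -/

/-- The parent of a non-central vertex in the star tree. -/
def par (p q r : ℕ) : (Fin p ⊕ Fin q ⊕ Fin r) → Option (Fin p ⊕ Fin q ⊕ Fin r)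
  | Sum.inl j => if _ : j.val = 0 then none else some (Sum.inl ⟨j.val - 1, by omega⟩)
  | Sum.inr (Sum.inl j) => if _ : j.val = 0 then none else some (Sum.inr (Sum.inl ⟨j.val - 1, by omega⟩))
  | Sum.inr (Sum.inr j) => if _ : j.val = 0 then none else some (Sum.inr (Sum.inr ⟨j.val - 1, by omega⟩))

/-- Depth of a vertex. -/
def dep (p q r : ℕ) : Option (Fin p ⊕ Fin q ⊕ Fin r) → ℕ
  | none => 0
  | some (Sum.inl j) => j.val + 1
  | some (Sum.inr (Sum.inl j)) => j.val + 1
  | some (Sum.inr (Sum.inr j)) => j.val + 1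

lemma par1_zero (p q r : ℕ) (j : Fin p) (h : j.val = 0) : par p q r (Sum.inl j) = none := by
  simp [par, h]
lemma par2_zero (p q r : ℕ) (j : Fin q) (h : j.val = 0) : par p q r (Sum.inr (Sum.inl j)) = none := by
  simp [par, h]
lemma par3_zero (p q r : ℕ) (j : Fin r) (h : j.val = 0) : par p q r (Sum.inr (Sum.inr j)) = none := by
  simp [par, h]
lemma par1_succ (p q r : ℕ) (j j' : Fin p) (h : j.val + 1 = j'.val) :
    par p q r (Sum.inl j') = some (Sum.inl j) := by
  simp only [par]; rw [dif_neg (by omega)]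
  simp only [Option.some.injEq, Sum.inl.injEq, Fin.ext_iff]
  omega
lemma par2_succ (p q r : ℕ) (j j' : Fin q) (h : j.val + 1 = j'.val) :
    par p q r (Sum.inr (Sum.inl j')) = some (Sum.inr (Sum.inl j)) := by
  simp only [par]; rw [dif_neg (by omega)]
  simp only [Option.some.injEq, Sum.inr.injEq, Sum.inl.injEq, Fin.ext_iff]
  omega
lemma par3_succ (p q r : ℕ) (j j' : Fin r) (h : j.val + 1 = j'.val) :
    par p q r (Sum.inr (Sum.inr j')) = some (Sum.inr (Sum.inr j)) := by
  simp only [par]; rw [dif_neg (by omega)]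
  simp only [Option.some.injEq, Sum.inr.injEq, Fin.ext_iff]
  omega

lemma dep_par (p q r : ℕ) (w : Fin p ⊕ Fin q ⊕ Fin r) :
    dep p q r (par p q r w) + 1 = dep p q r (some w) := by
  rcases w with j | j | j <;> by_cases h0 : j.val = 0
  · rw [par1_zero p q r j h0]; simp [dep, h0]
  · rw [par1_succ p q r ⟨j.val - 1, by omega⟩ j (by show j.val - 1 + 1 = j.val; omega)]
    show j.val - 1 + 1 + 1 = j.val + 1; omega
  · rw [par2_zero p q r j h0]; simp [dep, h0]
  · rw [par2_succ p q r ⟨j.val - 1, by omega⟩ j (by show j.val - 1 + 1 = j.val; omega)]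
    show j.val - 1 + 1 + 1 = j.val + 1; omega
  · rw [par3_zero p q r j h0]; simp [dep, h0]
  · rw [par3_succ p q r ⟨j.val - 1, by omega⟩ j (by show j.val - 1 + 1 = j.val; omega)]
    show j.val - 1 + 1 + 1 = j.val + 1; omega

lemma adj_iff (p q r : ℕ) (a b : Option (Fin p ⊕ Fin q ⊕ Fin r)) :
    (starTree p q r).Adj a b ↔ ∃ w, s(a, b) = s(some w, par p q r w) := by
  rw [starTree, SimpleGraph.fromRel_adj]
  constructor
  · rintro ⟨hne, hrel⟩
    rcases a with _ | (j | j | j) <;> rcases b with _ | (j' | j' | j') <;>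
      simp only [] at hrel <;> rcases hrel with h0 | h0
    all_goals first
    | exact h0.elim
    | exact ⟨Sum.inl j', by rw [par1_zero p q r j' h0, Sym2.eq_swap]⟩
    | exact ⟨Sum.inr (Sum.inl j'), by rw [par2_zero p q r j' h0, Sym2.eq_swap]⟩
    | exact ⟨Sum.inr (Sum.inr j'), by rw [par3_zero p q r j' h0, Sym2.eq_swap]⟩
    | exact ⟨Sum.inl j, by rw [par1_zero p q r j h0]⟩
    | exact ⟨Sum.inr (Sum.inl j), by rw [par2_zero p q r j h0]⟩
    | exact ⟨Sum.inr (Sum.inr j), by rw [par3_zero p q r j h0]⟩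
    | exact ⟨Sum.inl j', by rw [par1_succ p q r j j' h0, Sym2.eq_swap]⟩
    | exact ⟨Sum.inr (Sum.inl j'), by rw [par2_succ p q r j j' h0, Sym2.eq_swap]⟩
    | exact ⟨Sum.inr (Sum.inr j'), by rw [par3_succ p q r j j' h0, Sym2.eq_swap]⟩
    | exact ⟨Sum.inl j, by rw [par1_succ p q r j' j h0]⟩
    | exact ⟨Sum.inr (Sum.inl j), by rw [par2_succ p q r j' j h0]⟩
    | exact ⟨Sum.inr (Sum.inr j), by rw [par3_succ p q r j' j h0]⟩
  · rintro ⟨w, hw⟩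
    rw [Sym2.eq_iff] at hw
    rcases w with j | j | j <;> by_cases h0 : j.val = 0
    · rw [par1_zero p q r j h0] at hw
      rcases hw with ⟨rfl, rfl⟩ | ⟨rfl, rfl⟩
      · exact ⟨by simp, Or.inr h0⟩
      · exact ⟨by simp, Or.inl h0⟩
    · have hjm : ((⟨j.val - 1, by omega⟩ : Fin p)).val = j.val - 1 := rfl
      rw [par1_succ p q r ⟨j.val - 1, by omega⟩ j (by omega)] at hw
      rcases hw with ⟨rfl, rfl⟩ | ⟨rfl, rfl⟩
      · refine ⟨?_, Or.inr (show ((⟨j.val - 1, by omega⟩ : Fin p)).val + 1 = j.val by omega)⟩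
        simp only [ne_eq, Option.some.injEq, Sum.inl.injEq]
        intro he; rw [Fin.ext_iff] at he; omega
      · refine ⟨?_, Or.inl (show ((⟨j.val - 1, by omega⟩ : Fin p)).val + 1 = j.val by omega)⟩
        simp only [ne_eq, Option.some.injEq, Sum.inl.injEq]
        intro he; rw [Fin.ext_iff] at he; omega
    · rw [par2_zero p q r j h0] at hw
      rcases hw with ⟨rfl, rfl⟩ | ⟨rfl, rfl⟩
      · exact ⟨by simp, Or.inr h0⟩
      · exact ⟨by simp, Or.inl h0⟩
    · have hjm : ((⟨j.val - 1, by omega⟩ : Fin q)).val = j.val - 1 := rfl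
      rw [par2_succ p q r ⟨j.val - 1, by omega⟩ j (by omega)] at hw
      rcases hw with ⟨rfl, rfl⟩ | ⟨rfl, rfl⟩
      · refine ⟨?_, Or.inr (show ((⟨j.val - 1, by omega⟩ : Fin q)).val + 1 = j.val by omega)⟩
        simp only [ne_eq, Option.some.injEq, Sum.inr.injEq, Sum.inl.injEq]
        intro he; rw [Fin.ext_iff] at he; omega
      · refine ⟨?_, Or.inl (show ((⟨j.val - 1, by omega⟩ : Fin q)).val + 1 = j.val by omega)⟩
        simp only [ne_eq, Option.some.injEq, Sum.inr.injEq, Sum.inl.injEq]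
        intro he; rw [Fin.ext_iff] at he; omega
    · rw [par3_zero p q r j h0] at hw
      rcases hw with ⟨rfl, rfl⟩ | ⟨rfl, rfl⟩
      · exact ⟨by simp, Or.inr h0⟩
      · exact ⟨by simp, Or.inl h0⟩
    · have hjm : ((⟨j.val - 1, by omega⟩ : Fin r)).val = j.val - 1 := rfl
      rw [par3_succ p q r ⟨j.val - 1, by omega⟩ j (by omega)] at hw
      rcases hw with ⟨rfl, rfl⟩ | ⟨rfl, rfl⟩
      · refine ⟨?_, Or.inr (show ((⟨j.val - 1, by omega⟩ : Fin r)).val + 1 = j.val by omega)⟩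
        simp only [ne_eq, Option.some.injEq, Sum.inr.injEq]
        intro he; rw [Fin.ext_iff] at he; omega
      · refine ⟨?_, Or.inl (show ((⟨j.val - 1, by omega⟩ : Fin r)).val + 1 = j.val by omega)⟩
        simp only [ne_eq, Option.some.injEq, Sum.inr.injEq]
        intro he; rw [Fin.ext_iff] at he; omega

lemma edge_finset_eq (p q r : ℕ) :
    (starTree p q r).edgeFinset
      = Finset.image (fun w => s(some w, par p q r w)) Finset.univ := by
  ext e
  refine Sym2.ind (fun a b => ?_) e
  simp only [mem_edgeFinset, mem_edgeSet, adj_iff, Finset.mem_image, Finset.mem_univ, true_and]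
  constructor
  · rintro ⟨w, hw⟩; exact ⟨w, hw.symm⟩
  · rintro ⟨w, hw⟩; exact ⟨w, hw.symm⟩

lemma edge_sum (p q r : ℕ) (f : Sym2 (Option (Fin p ⊕ Fin q ⊕ Fin r)) → ℤ) :
    ∑ e ∈ (starTree p q r).edgeFinset, f e = ∑ w, f s(some w, par p q r w) := by
  rw [edge_finset_eq, Finset.sum_image]
  intro w _ w' _ hgw
  rw [Sym2.eq_iff] at hgw
  rcases hgw with ⟨h1, _⟩ | ⟨h1, h2⟩
  · exact Option.some_injective _ h1
  · exfalso
    have d1 := dep_par p q r w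
    have d2 := dep_par p q r w'
    rw [← h1] at d2
    rw [h2] at d1
    omega

/-- The test vector. -/
def xv (p q r : ℕ) : Option (Fin p ⊕ Fin q ⊕ Fin r) → ℤ
  | none => ((p:ℤ)+1) * (((q:ℤ)+1) * ((r:ℤ)+1))
  | some (Sum.inl j) => ((p:ℤ) - (j.val:ℤ)) * (((q:ℤ)+1) * ((r:ℤ)+1))
  | some (Sum.inr (Sum.inl j)) => ((q:ℤ) - (j.val:ℤ)) * (((p:ℤ)+1) * ((r:ℤ)+1))
  | some (Sum.inr (Sum.inr j)) => ((r:ℤ) - (j.val:ℤ)) * (((p:ℤ)+1) * ((q:ℤ)+1))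

lemma xv_par1 (p q r : ℕ) (j : Fin p) :
    xv p q r (par p q r (Sum.inl j))
      = ((p:ℤ) + 1 - (j.val:ℤ)) * (((q:ℤ)+1) * ((r:ℤ)+1)) := by
  by_cases h0 : j.val = 0
  · rw [par1_zero p q r j h0]
    simp only [xv, h0]
    push_cast
    ring
  · rw [par1_succ p q r ⟨j.val - 1, by omega⟩ j (by show j.val - 1 + 1 = j.val; omega)]
    simp only [xv]
    have hcast : ((((⟨j.val - 1, by omega⟩ : Fin p)).val : ℤ)) = (j.val : ℤ) - 1 := by
      show ((j.val - 1 : ℕ) : ℤ) = (j.val:ℤ) - 1; omega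
    rw [hcast]; ring

lemma xv_par2 (p q r : ℕ) (j : Fin q) :
    xv p q r (par p q r (Sum.inr (Sum.inl j)))
      = ((q:ℤ) + 1 - (j.val:ℤ)) * (((p:ℤ)+1) * ((r:ℤ)+1)) := by
  by_cases h0 : j.val = 0
  · rw [par2_zero p q r j h0]
    simp only [xv, h0]
    push_cast
    ring
  · rw [par2_succ p q r ⟨j.val - 1, by omega⟩ j (by show j.val - 1 + 1 = j.val; omega)]
    simp only [xv]
    have hcast : ((((⟨j.val - 1, by omega⟩ : Fin q)).val : ℤ)) = (j.val : ℤ) - 1 := by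
      show ((j.val - 1 : ℕ) : ℤ) = (j.val:ℤ) - 1; omega
    rw [hcast]; ring

lemma xv_par3 (p q r : ℕ) (j : Fin r) :
    xv p q r (par p q r (Sum.inr (Sum.inr j)))
      = ((r:ℤ) + 1 - (j.val:ℤ)) * (((p:ℤ)+1) * ((q:ℤ)+1)) := by
  by_cases h0 : j.val = 0
  · rw [par3_zero p q r j h0]
    simp only [xv, h0]
    push_cast
    ring
  · rw [par3_succ p q r ⟨j.val - 1, by omega⟩ j (by show j.val - 1 + 1 = j.val; omega)]
    simp only [xv]
    have hcast : ((((⟨j.val - 1, by omega⟩ : Fin r)).val : ℤ)) = (j.val : ℤ) - 1 := by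
      show ((j.val - 1 : ℕ) : ℤ) = (j.val:ℤ) - 1; omega
    rw [hcast]; ring

lemma gauss (n : ℕ) : (∑ j ∈ Finset.range n, ((n:ℤ) - (j:ℤ))) * 2 = (n:ℤ) * ((n:ℤ)+1) := by
  induction n with
  | zero => simp
  | succ n ih =>
    have step : ∀ j ∈ Finset.range n, (((n+1:ℕ):ℤ) - (j:ℤ)) = ((n:ℤ) - (j:ℤ)) + 1 := by
      intro j _; push_cast; ring
    rw [Finset.sum_range_succ, Finset.sum_congr rfl step, Finset.sum_add_distrib,
      Finset.sum_const, Finset.card_range]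
    push_cast
    linear_combination ih

lemma armsum (n : ℕ) (d : ℤ) :
    ((∑ j : Fin n, (((n:ℤ) - (j.val:ℤ)) * d)^2) -
      ∑ j : Fin n, (((n:ℤ) - (j.val:ℤ)) * d) * (((n:ℤ) + 1 - (j.val:ℤ)) * d)) * 2
      = -((n:ℤ) * ((n:ℤ)+1) * d^2) := by
  rw [← Finset.sum_sub_distrib]
  have e : ∀ j : Fin n, ((((n:ℤ) - (j.val:ℤ)) * d)^2
      - (((n:ℤ) - (j.val:ℤ)) * d) * (((n:ℤ) + 1 - (j.val:ℤ)) * d))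
      = ((n:ℤ) - (j.val:ℤ)) * (-(d^2)) := fun j => by ring
  rw [Finset.sum_congr rfl (fun j _ => e j), ← Finset.sum_mul,
    Fin.sum_univ_eq_sum_range (fun k => ((n:ℤ) - (k:ℤ)))]
  linear_combination (-(d^2)) * gauss n

set_option maxHeartbeats 2000000 in
/-- If the arm lengths `(p, q, r)` of a star-shaped tree (a tree with exactly one vertex
of degree `3`, all other vertices of degree at most `2`) satisfy
`1/(p+1) + 1/(q+1) + 1/(r+1) < 1`, then its quadratic form is not positive definite. -/
theorem starTree_form_not_definite (p q r : ℕ)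
    (h : (1 : ℚ) / (p + 1) + 1 / (q + 1) + 1 / (r + 1) < 1) :
    ¬ (∀ x : Option (Fin p ⊕ Fin q ⊕ Fin r) → ℤ, x ≠ 0 → 0 < graphForm (starTree p q r) x) := by
  intro hpos
  have hc : (0:ℤ) < ((p:ℤ)+1) * (((q:ℤ)+1) * ((r:ℤ)+1)) := by positivity
  have hx0 : xv p q r ≠ 0 := by
    intro hh
    have h1 : xv p q r none = 0 := congrFun hh none
    simp only [xv] at h1
    linarith
  have key := hpos (xv p q r) hx0
  have hform : graphForm (starTree p q r) (xv p q r) ≤ 0 := by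
    have hqlt : ((q:ℚ)+1)*((r:ℚ)+1) + ((p:ℚ)+1)*((r:ℚ)+1) + ((p:ℚ)+1)*((q:ℚ)+1)
        < ((p:ℚ)+1)*(((q:ℚ)+1)*((r:ℚ)+1)) := by
      have hX : (0:ℚ) < ((p:ℚ)+1)*(((q:ℚ)+1)*((r:ℚ)+1)) := by positivity
      have hmul := mul_lt_mul_of_pos_right h hX
      have e1 : (1:ℚ)/((p:ℚ)+1) * (((p:ℚ)+1)*(((q:ℚ)+1)*((r:ℚ)+1)))
          = ((q:ℚ)+1)*((r:ℚ)+1) := by field_simp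
      have e2 : (1:ℚ)/((q:ℚ)+1) * (((p:ℚ)+1)*(((q:ℚ)+1)*((r:ℚ)+1)))
          = ((p:ℚ)+1)*((r:ℚ)+1) := by field_simp
      have e3 : (1:ℚ)/((r:ℚ)+1) * (((p:ℚ)+1)*(((q:ℚ)+1)*((r:ℚ)+1)))
          = ((p:ℚ)+1)*((q:ℚ)+1) := by field_simp
      nlinarith [hmul, e1, e2, e3]
    have hlt : ((q:ℤ)+1)*((r:ℤ)+1) + ((p:ℤ)+1)*((r:ℤ)+1) + ((p:ℤ)+1)*((q:ℤ)+1)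
        < ((p:ℤ)+1)*(((q:ℤ)+1)*((r:ℤ)+1)) := by exact_mod_cast hqlt
    have hmul2 := mul_lt_mul_of_pos_left hlt hc
    have a1 := armsum p (((q:ℤ)+1) * ((r:ℤ)+1))
    have a2 := armsum q (((p:ℤ)+1) * ((r:ℤ)+1))
    have a3 := armsum r (((p:ℤ)+1) * ((q:ℤ)+1))
    unfold graphForm
    rw [edge_sum]
    simp only [Sym2.lift_mk, Fintype.sum_option, Fintype.sum_sum_type,
      xv_par1, xv_par2, xv_par3]
    simp only [xv]
    linarith [a1, a2, a3, hmul2]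
  linarith
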